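/- arXiv:1812.02016 — 11 statements merged into one kernel-verified Lean document; each statement's English description precedes it below -/
import Mathlib

section
/- For every variety 𝒱, the family 𝒯(𝒱), whose X-component consists of all quotients of X with codomain in 𝒱, is an equational theory: each component is an equation (Λ-codirected and closed under ℰ_𝒳-quotients), and the family is substitution invariant and ℰ_𝒳-complete. -/
open CategoryTheory CategoryTheory.Limits

universe u

variable {A : Type u} [Category.{u} A]

/-- A proper factorization system `(ℰ, ℳ)` on a category. -/
structure ProperFS (E M : MorphismProperty A) : Prop where
  iso_mem_E : ∀ {X Y : A} (f : X ⟶ Y), IsIso f → E f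
  iso_mem_M : ∀ {X Y : A} (f : X ⟶ Y), IsIso f → M f
  comp_mem_E : ∀ {X Y Z : A} (f : X ⟶ Y) (g : Y ⟶ Z), E f → E g → E (f ≫ g)
  comp_mem_M : ∀ {X Y Z : A} (f : X ⟶ Y) (g : Y ⟶ Z), M f → M g → M (f ≫ g)
  factor : ∀ {X Y : A} (f : X ⟶ Y), ∃ (Z : A) (e : X ⟶ Z) (m : Z ⟶ Y), E e ∧ M m ∧ e ≫ m = f
  fill_in : ∀ {X Y Z W : A} (e : X ⟶ Y) (f : X ⟶ Z) (g : Y ⟶ W) (m : Z ⟶ W),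
      E e → M m → e ≫ g = f ≫ m → ∃! d : Y ⟶ Z, e ≫ d = f ∧ d ≫ m = g
  epi_of_E : ∀ {X Y : A} (f : X ⟶ Y), E f → Epi f
  mono_of_M : ∀ {X Y : A} (f : X ⟶ Y), M f → Mono f

/-- `EX E XX f` : `f ∈ ℰ` and every object of `XX` is projective w.r.t. `f`,
i.e. the class `ℰ_𝒳`. -/
def EX (E : MorphismProperty A) (XX : Set A) {B C : A} (f : B ⟶ C) : Prop :=
  E f ∧ ∀ X ∈ XX, ∀ h : X ⟶ C, ∃ g : X ⟶ B, g ≫ f = h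

/-- A quotient of `X`: a morphism in `ℰ` with domain `X`. -/
structure EQuot (E : MorphismProperty A) (X : A) : Type u where
  cod : A
  hom : X ⟶ cod
  mem : E hom

/-- `q ≤ q'` iff `q'` factors through `q`. -/
def EQuotLE {E : MorphismProperty A} {X : A} (q q' : EQuot E X) : Prop :=
  ∃ h : q.cod ⟶ q'.cod, q.hom ≫ h = q'.hom

/-- An equation over `X`: a class of quotients of `X` with codomain in `A0`,
`Λ`-codirected and closed under `ℰ_𝒳`-quotients. -/
structure IsEquation (E : MorphismProperty A) (A0 : Set A) (Λ : Set Cardinal.{u})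
    (XX : Set A) (X : A) (T : Set (EQuot E X)) : Prop where
  cod_mem : ∀ q ∈ T, q.cod ∈ A0
  codirected : ∀ F : Set (EQuot E X), F ⊆ T → Cardinal.mk ↥F ∈ Λ →
      ∃ q ∈ T, ∀ r ∈ F, EQuotLE q r
  closed_under_EX : ∀ q ∈ T, ∀ q' : EQuot E X, q'.cod ∈ A0 →
      (∃ f : q.cod ⟶ q'.cod, EX E XX f ∧ q.hom ≫ f = q'.hom) → q' ∈ T

/-- `B ⊨ T` : every morphism `X ⟶ B` factors through some member of `T`. -/
def SatisfiesEq {E : MorphismProperty A} {X : A} (T : Set (EQuot E X)) (B : A) : Prop :=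
  ∀ h : X ⟶ B, ∃ q ∈ T, ∃ k : q.cod ⟶ B, q.hom ≫ k = h

/-- `B` is `XX`-generated: an `ℰ`-quotient of an object of `XX`. -/
def XGenerated (E : MorphismProperty A) (XX : Set A) (B : A) : Prop :=
  ∃ X ∈ XX, ∃ e : X ⟶ B, E e

/-- The standing assumptions of the paper. -/
structure Setting (E M : MorphismProperty A) (A0 : Set A) (Λ : Set Cardinal.{u})
    (XX : Set A) : Prop where
  fs : ProperFS E M
  has_products : ∀ I : Type u, Cardinal.mk I ∈ Λ → ∀ f : I → A,
      ∃ (P : A) (π : ∀ i, P ⟶ f i), Nonempty (IsLimit (Fan.mk P π))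
  A0_iso_closed : ∀ {B C : A}, (B ≅ C) → B ∈ A0 → C ∈ A0
  A0_prod_closed : ∀ (I : Type u) (f : I → A), Cardinal.mk I ∈ Λ → (∀ i, f i ∈ A0) →
      ∀ (P : A) (π : ∀ i, P ⟶ f i), Nonempty (IsLimit (Fan.mk P π)) → P ∈ A0
  A0_sub_closed : ∀ {B C : A} (m : B ⟶ C), M m → C ∈ A0 → XGenerated E XX B → B ∈ A0
  A0_covered : ∀ B ∈ A0, ∃ X ∈ XX, ∃ e : X ⟶ B, EX E XX e

/-- A variety: a subclass of `A0` closed under `ℰ_𝒳`-quotients, `ℳ`-subobjects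
and `Λ`-products. -/
structure IsVariety (E M : MorphismProperty A) (A0 : Set A) (Λ : Set Cardinal.{u})
    (XX : Set A) (V : Set A) : Prop where
  subset_A0 : V ⊆ A0
  closed_quot : ∀ {B C : A} (e : B ⟶ C), EX E XX e → B ∈ V → C ∈ A0 → C ∈ V
  closed_sub : ∀ {B C : A} (m : B ⟶ C), M m → B ∈ A0 → C ∈ V → B ∈ V
  closed_prod : ∀ (I : Type u) (f : I → A), Cardinal.mk I ∈ Λ → (∀ i, f i ∈ V) →
      ∀ (P : A) (π : ∀ i, P ⟶ f i), Nonempty (IsLimit (Fan.mk P π)) → P ∈ V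

/-- An equational theory: a substitution-invariant and `ℰ_𝒳`-complete family of
equations. -/
structure IsTheory (E M : MorphismProperty A) (A0 : Set A) (Λ : Set Cardinal.{u})
    (XX : Set A) (T : ∀ X : A, Set (EQuot E X)) : Prop where
  eqn : ∀ X ∈ XX, IsEquation E A0 Λ XX X (T X)
  subst_invariant : ∀ X ∈ XX, ∀ Y ∈ XX, ∀ h : X ⟶ Y, ∀ q ∈ T Y,
      ∀ (q' : EQuot E X) (m : q'.cod ⟶ q.cod), M m → q'.hom ≫ m = h ≫ q.hom → q' ∈ T X
  EX_complete : ∀ Y ∈ XX, ∀ q ∈ T Y, ∃ X ∈ XX, ∃ q' ∈ T X, EX E XX q'.hom ∧ q'.cod = q.cod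

/-- `𝒯(𝒱)`: the family whose `X`-component consists of all quotients of `X`
with codomain in `V`. -/
def theoryOf (E : MorphismProperty A) (V : Set A) : ∀ X : A, Set (EQuot E X) :=
  fun _ => {q | q.cod ∈ V}

/-- `V(𝒯)`: the class of objects of `A0` satisfying every component of `T`. -/
def modelsOf (E : MorphismProperty A) (A0 : Set A) (XX : Set A)
    (T : ∀ X : A, Set (EQuot E X)) : Set A :=
  {B | B ∈ A0 ∧ ∀ X ∈ XX, SatisfiesEq (T X) B}

/-- Order on equations over `X`: `T ≤ T'` iff every quotient in `T'` factors
through some quotient in `T`. -/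
def EqnLE {E : MorphismProperty A} {X : A} (T T' : Set (EQuot E X)) : Prop :=
  ∀ q' ∈ T', ∃ q ∈ T, EQuotLE q q'

/-- Componentwise order on theories. -/
def TheoryLE {E : MorphismProperty A} (XX : Set A)
    (T T' : ∀ X : A, Set (EQuot E X)) : Prop :=
  ∀ X ∈ XX, EqnLE (T X) (T' X)

/-- For every variety `𝒱`, the family `𝒯(𝒱)` is an equational theory: each
component is an equation, and the family is substitution invariant and
`ℰ_𝒳`-complete. -/
theorem theoryOf_isTheory (E M : MorphismProperty A) (A0 : Set A) (Λ : Set Cardinal.{u})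
    (XX : Set A) (hset : Setting E M A0 Λ XX) (V : Set A)
    (hV : IsVariety E M A0 Λ XX V) :
    IsTheory E M A0 Λ XX (theoryOf E V) := by
  constructor
  · intro X hX
    constructor
    · intro q hq
      exact hV.subset_A0 hq
    · intro F hF hcard
      -- product of the codomains of members of F
      obtain ⟨P, π, ⟨hlim⟩⟩ := hset.has_products (↥F) hcard (fun i => i.1.cod)
      have hPV : P ∈ V :=
        hV.closed_prod (↥F) (fun i => i.1.cod) hcard (fun i => hF i.2) P π ⟨hlim⟩
      -- induced map X ⟶ P
      let s : Fan (fun i : ↥F => i.1.cod) := Fan.mk X (fun i => i.1.hom)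
      let u : X ⟶ P := hlim.lift s
      have hu : ∀ i : ↥F, u ≫ π i = i.1.hom := fun i => hlim.fac s ⟨i⟩
      -- factor u
      obtain ⟨Q, e, m, hE, hM, hem⟩ := hset.fs.factor u
      have hQgen : XGenerated E XX Q := ⟨X, hX, e, hE⟩
      have hQA0 : Q ∈ A0 := hset.A0_sub_closed m hM (hV.subset_A0 hPV) hQgen
      have hQV : Q ∈ V := hV.closed_sub m hM hQA0 hPV
      refine ⟨⟨Q, e, hE⟩, hQV, ?_⟩
      intro r hr
      exact ⟨m ≫ π ⟨r, hr⟩, by rw [← Category.assoc, hem, hu ⟨r, hr⟩]⟩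
    · intro q hq q' hA0 ⟨f, hf, hfc⟩
      exact hV.closed_quot f hf hq hA0
  · intro X hX Y hY h q hq q' m hM hcomm
    have hgen : XGenerated E XX q'.cod := ⟨X, hX, q'.hom, q'.mem⟩
    have hA0 : q'.cod ∈ A0 := hset.A0_sub_closed m hM (hV.subset_A0 hq) hgen
    exact hV.closed_sub m hM hA0 hq
  · intro Y hY q hq
    obtain ⟨X, hX, e, he⟩ := hset.A0_covered q.cod (hV.subset_A0 hq)
    exact ⟨X, hX, ⟨q.cod, e, he.1⟩, hq, he, rfl⟩
end

section
/- Let 𝒯 be an equational theory. An object A ∈ 𝒜₀ belongs to V(𝒯) if and only if, for some Y ∈ 𝒳, the equation 𝒯_Y contains a quotient with codomain A. -/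
open CategoryTheory CategoryTheory.Limits

universe u

variable {A : Type u} [Category.{u} A]

/-- Let `𝒯` be an equational theory. An object `B ∈ 𝒜₀` belongs to `V(𝒯)` iff for
some `Y ∈ 𝒳` the equation `𝒯_Y` contains a quotient with codomain `B`. -/
theorem mem_models_iff (E M : MorphismProperty A) (A0 : Set A) (Λ : Set Cardinal.{u})
    (XX : Set A) (hset : Setting E M A0 Λ XX)
    (T : ∀ X : A, Set (EQuot E X)) (hT : IsTheory E M A0 Λ XX T)
    (B : A) (hB : B ∈ A0) :
    B ∈ modelsOf E A0 XX T ↔ ∃ Y ∈ XX, ∃ q ∈ T Y, EQuot.cod q = B := by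
  constructor
  · rintro ⟨hA0, hsat⟩
    obtain ⟨X, hX, e, heEX⟩ := hset.A0_covered B hB
    obtain ⟨q, hq, k, hk⟩ := hsat X hX e
    obtain ⟨Z, e', m, he', hm, hfac⟩ := hset.fs.factor k
    have hsq : e ≫ 𝟙 B = (q.hom ≫ e') ≫ m := by
      rw [Category.comp_id, Category.assoc, hfac, hk]
    obtain ⟨d, ⟨hd1, hd2⟩, -⟩ := hset.fs.fill_in e (q.hom ≫ e') (𝟙 B) m heEX.1 hm hsq
    have hmono := hset.fs.mono_of_M m hm
    have hmd : m ≫ d = 𝟙 Z := by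
      rw [← cancel_mono m, Category.assoc, hd2, Category.comp_id, Category.id_comp]
    have hiso : IsIso m := ⟨d, hmd, hd2⟩
    have hEk : E k := by
      rw [← hfac]
      exact hset.fs.comp_mem_E e' m he' (hset.fs.iso_mem_E m hiso)
    have hEXk : EX E XX k := by
      refine ⟨hEk, fun X' hX' h => ?_⟩
      obtain ⟨g, hg⟩ := heEX.2 X' hX' h
      exact ⟨g ≫ q.hom, by rw [Category.assoc, hk]; exact hg⟩
    refine ⟨X, hX, ⟨B, q.hom ≫ k, hset.fs.comp_mem_E _ _ q.mem hEk⟩, ?_, rfl⟩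
    exact (hT.eqn X hX).closed_under_EX q hq _ hB ⟨k, hEXk, rfl⟩
  · rintro ⟨Y, hY, q, hq, hcod⟩
    obtain ⟨X', hX', q', hq', hEX, hcod'⟩ := hT.EX_complete Y hY q hq
    rw [hcod] at hcod'
    subst hcod'
    refine ⟨hB, fun X hX h => ?_⟩
    obtain ⟨g, hg⟩ := hEX.2 X hX h
    obtain ⟨Z, e, m, he, hm, hfac⟩ := hset.fs.factor (g ≫ q'.hom)
    refine ⟨⟨Z, e, he⟩, ?_, m, by rw [hfac]; exact hg⟩
    exact hT.subst_invariant X hX X' hX' g q' hq' ⟨Z, e, he⟩ m hm hfac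
end

section
/- For every variety 𝒱 one has 𝒱 = V(𝒯(𝒱)): an object A ∈ 𝒜₀ lies in 𝒱 if and only if A satisfies every component of the equational theory 𝒯(𝒱). -/
open CategoryTheory CategoryTheory.Limits

universe u

variable {A : Type u} [Category.{u} A]

/-- For every variety `𝒱` one has `𝒱 = V(𝒯(𝒱))`: an object `B ∈ 𝒜₀` lies in `𝒱`
iff it satisfies every component of the equational theory `𝒯(𝒱)`. -/
theorem variety_eq_models_theoryOf (E M : MorphismProperty A) (A0 : Set A)
    (Λ : Set Cardinal.{u}) (XX : Set A) (hset : Setting E M A0 Λ XX)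
    (V : Set A) (hV : IsVariety E M A0 Λ XX V) :
    ∀ B ∈ A0, (B ∈ V ↔ B ∈ modelsOf E A0 XX (theoryOf E V)) := by
  intro B hB
  constructor
  · intro hBV
    refine ⟨hB, ?_⟩
    intro X hX h
    obtain ⟨Z, e, m, he, hm, hfac⟩ := hset.fs.factor h
    have hZA0 : Z ∈ A0 := hset.A0_sub_closed m hm hB ⟨X, hX, e, he⟩
    have hZV : Z ∈ V := hV.closed_sub m hm hZA0 hBV
    exact ⟨⟨Z, e, he⟩, hZV, m, hfac⟩
  · rintro ⟨-, hsat⟩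
    obtain ⟨X, hX, e, heEX⟩ := hset.A0_covered B hB
    obtain ⟨q, hq, k, hk⟩ := hsat X hX e
    obtain ⟨Z, e2, m, he2, hm, hfac⟩ := hset.fs.factor k
    have hE : E (q.hom ≫ e2) := hset.fs.comp_mem_E _ _ q.mem he2
    have hZA0 : Z ∈ A0 := hset.A0_sub_closed m hm hB ⟨X, hX, q.hom ≫ e2, hE⟩
    haveI hmono : Mono m := hset.fs.mono_of_M m hm
    have he2EX : EX E XX e2 := by
      refine ⟨he2, fun X' hX' h => ?_⟩
      obtain ⟨g, hg⟩ := heEX.2 X' hX' (h ≫ m)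
      refine ⟨g ≫ q.hom, ?_⟩
      have : ((g ≫ q.hom) ≫ e2) ≫ m = h ≫ m := by
        rw [Category.assoc, Category.assoc, hfac, hk, hg]
      exact (cancel_mono m).1 this
    have hZV : Z ∈ V := hV.closed_quot e2 he2EX hq hZA0
    obtain ⟨d, ⟨hd1, hd2⟩, -⟩ := hset.fs.fill_in e (q.hom ≫ e2) (𝟙 B) m heEX.1 hm
      (by rw [Category.comp_id, Category.assoc, hfac, hk])
    haveI : IsIso m := by
      refine ⟨d, ?_, hd2⟩
      have : (m ≫ d) ≫ m = 𝟙 Z ≫ m := by rw [Category.assoc, hd2, Category.comp_id, Category.id_comp]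
      exact (cancel_mono m).1 this
    exact hV.closed_sub (inv m) (hset.fs.iso_mem_M _ inferInstance) hB hZV
end

section
/- For every equational theory 𝒯 one has 𝒯 = 𝒯(V(𝒯)): for each X ∈ 𝒳, a quotient e : X ↠ A with A ∈ 𝒜₀ belongs to 𝒯_X if and only if A belongs to V(𝒯). -/
open CategoryTheory CategoryTheory.Limits

universe u

variable {A : Type u} [Category.{u} A]

/-- For every equational theory `𝒯` one has `𝒯 = 𝒯(V(𝒯))`: for each `X ∈ 𝒳`, a
quotient `e : X ↠ B` with `B ∈ 𝒜₀` belongs to `𝒯_X` iff `B ∈ V(𝒯)`. -/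
theorem theory_eq_theoryOf_models (E M : MorphismProperty A) (A0 : Set A)
    (Λ : Set Cardinal.{u}) (XX : Set A) (hset : Setting E M A0 Λ XX)
    (T : ∀ X : A, Set (EQuot E X)) (hT : IsTheory E M A0 Λ XX T)
    (X : A) (hX : X ∈ XX) (q : EQuot E X) (hq : q.cod ∈ A0) :
    q ∈ T X ↔ q.cod ∈ modelsOf E A0 XX T := by
  constructor
  · -- q ∈ T X → q.cod ∈ modelsOf
    intro hqT
    refine ⟨hq, ?_⟩
    intro Y hY h
    obtain ⟨X', hX', p, hpT, hpEX, hcod⟩ := hT.EX_complete X hX q hqT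
    obtain ⟨g, hg⟩ := hpEX.2 Y hY (h ≫ eqToHom hcod.symm)
    obtain ⟨Z, e, m, he, hm, hem⟩ := hset.fs.factor (g ≫ p.hom)
    refine ⟨⟨Z, e, he⟩, hT.subst_invariant Y hY X' hX' g p hpT ⟨Z, e, he⟩ m hm hem,
      m ≫ eqToHom hcod, ?_⟩
    have : e ≫ m ≫ eqToHom hcod = (h ≫ eqToHom hcod.symm) ≫ eqToHom hcod := by
      rw [← Category.assoc, hem, hg]
    simpa using this
  · -- q.cod ∈ modelsOf → q ∈ T X
    rintro ⟨-, hsat⟩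
    -- cover q.cod by an ℰ_𝒳-morphism from some X₀ ∈ 𝒳
    obtain ⟨X₀, hX₀, c, hcEX⟩ := hset.A0_covered q.cod hq
    -- c factors through some member of T X₀
    obtain ⟨p, hpT, u, hu⟩ := hsat X₀ hX₀ c
    -- u ∈ ℰ_𝒳 : projectivity follows from that of c
    have huEX : EX E XX u := by
      constructor
      · -- u ∈ E : diagonal fill-in argument
        obtain ⟨Z, e, m, he, hm, hem⟩ := hset.fs.factor u
        have hsq : c ≫ 𝟙 q.cod = (p.hom ≫ e) ≫ m := by
          simp [Category.assoc, hem, hu]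
        obtain ⟨d, ⟨hd1, hd2⟩, -⟩ := hset.fs.fill_in c (p.hom ≫ e) (𝟙 q.cod) m
          hcEX.1 hm hsq
        have : IsIso m := by
          have hmono := hset.fs.mono_of_M m hm
          refine ⟨d, ?_, hd2⟩
          have : (m ≫ d) ≫ m = 𝟙 Z ≫ m := by
            rw [Category.assoc, hd2]; simp
          exact hmono.right_cancellation _ _ this
        have := hset.fs.iso_mem_E m this
        rw [← hem]
        exact hset.fs.comp_mem_E e m he this
      · intro Y hY h
        obtain ⟨g, hg⟩ := hcEX.2 Y hY h
        exact ⟨g ≫ p.hom, by rw [Category.assoc, hu, hg]⟩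
    -- hence the quotient c itself lies in T X₀
    have hcT : (⟨q.cod, c, hcEX.1⟩ : EQuot E X₀) ∈ T X₀ :=
      (hT.eqn X₀ hX₀).closed_under_EX p hpT ⟨q.cod, c, hcEX.1⟩ hq ⟨u, huEX, hu⟩
    -- q.hom factors through c since c ∈ ℰ_𝒳 and X ∈ 𝒳
    obtain ⟨g, hg⟩ := hcEX.2 X hX q.hom
    exact hT.subst_invariant X hX X₀ hX₀ g _ hcT q (𝟙 q.cod)
      (hset.fs.iso_mem_M _ inferInstance) (by simpa using hg.symm)
end

section
/- A class of Σ-algebras is a variety, i.e. closed under homomorphic images (codomains of surjective Σ-homomorphisms with domain in the class), subalgebras, and products of arbitrary set-indexed families of its members, if and only if it is axiomatizable by term equations: there is a class of term equations (over arbitrary variable sets) such that a Σ-algebra belongs to the class if and only if it satisfies every one of these term equations. -/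
universe u

/-- Σ-terms over a set `X` of variables, for the signature with operation symbols `S`
and arity function `ar`. -/
inductive Term (S : Type u) (ar : S → ℕ) (X : Type u) : Type u
  | var : X → Term S ar X
  | op : (s : S) → (Fin (ar s) → Term S ar X) → Term S ar X

/-- A Σ-algebra: a set with an `ar s`-ary operation for each `s ∈ S`. -/
structure Alg (S : Type u) (ar : S → ℕ) : Type (u + 1) where
  carrier : Type u
  op : (s : S) → (Fin (ar s) → carrier) → carrier

variable {S : Type u} {ar : S → ℕ}

/-- The unique homomorphic extension `h#` of `h : X → A` to the term algebra. -/
def Alg.eval (A : Alg S ar) {X : Type u} (h : X → A.carrier) : Term S ar X → A.carrier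
  | Term.var x => h x
  | Term.op s v => A.op s fun i => A.eval h (v i)

/-- A Σ-homomorphism. -/
def IsHom (A B : Alg S ar) (f : A.carrier → B.carrier) : Prop :=
  ∀ (s : S) (v : Fin (ar s) → A.carrier), f (A.op s v) = B.op s fun i => f (v i)

/-- A Σ-algebra satisfies the term equation `s = t` over `X` if all evaluations agree. -/
def Alg.Satisfies (A : Alg S ar) {X : Type u} (s t : Term S ar X) : Prop :=
  ∀ h : X → A.carrier, A.eval h s = A.eval h t

/-- The product of a family of Σ-algebras, with pointwise operations. -/
def prodAlg {I : Type u} (f : I → Alg S ar) : Alg S ar where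
  carrier := ∀ i, (f i).carrier
  op := fun s v i => (f i).op s fun j => v j i

/-- The term algebra `T_Σ X`. -/
def termAlg (S : Type u) (ar : S → ℕ) (X : Type u) : Alg S ar where
  carrier := Term S ar X
  op := Term.op

lemma eval_hom {A B : Alg S ar} {f : A.carrier → B.carrier} (hf : IsHom A B f)
    {X : Type u} (g : X → A.carrier) :
    ∀ t : Term S ar X, f (A.eval g t) = B.eval (fun x => f (g x)) t
  | Term.var _ => rfl
  | Term.op s v => by
      show f (A.op s fun i => A.eval g (v i)) = B.op s fun i => B.eval (fun x => f (g x)) (v i)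
      rw [hf]
      exact congrArg _ (funext fun i => eval_hom hf g (v i))

lemma prod_eval {I : Type u} (f : I → Alg S ar) {X : Type u}
    (h : X → (prodAlg f).carrier) :
    ∀ (t : Term S ar X) (i : I), (prodAlg f).eval h t i = (f i).eval (fun x => h x i) t
  | Term.var _, _ => rfl
  | Term.op s v, i => congrArg _ (funext fun j => prod_eval f h (v j) i)

/-- **Birkhoff's HSP Theorem**: a class of Σ-algebras is closed under homomorphic
images, subalgebras and products iff it is axiomatizable by term equations. -/
theorem birkhoff_hsp (S : Type u) (ar : S → ℕ) (K : Set (Alg S ar)) :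
    ((∀ A ∈ K, ∀ B : Alg S ar,
        (∃ f : A.carrier → B.carrier, IsHom A B f ∧ Function.Surjective f) → B ∈ K) ∧
     (∀ B ∈ K, ∀ A : Alg S ar,
        (∃ f : A.carrier → B.carrier, IsHom A B f ∧ Function.Injective f) → A ∈ K) ∧
     (∀ (I : Type u) (f : I → Alg S ar), (∀ i, f i ∈ K) → prodAlg f ∈ K)) ↔
    ∃ Eqs : Set (Σ X : Type u, Term S ar X × Term S ar X),
      ∀ A : Alg S ar, A ∈ K ↔ ∀ p ∈ Eqs, A.Satisfies p.2.1 p.2.2 := by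
  constructor
  · rintro ⟨hH, hS, hP⟩
    refine ⟨{ p | ∀ B ∈ K, B.Satisfies p.2.1 p.2.2 }, fun A => ⟨fun hA p hp => hp A hA, ?_⟩⟩
    intro hA
    have hB0 : prodAlg (fun i : PEmpty.{u+1} => i.elim) ∈ K := hP _ _ (fun i => i.elim)
    have hW : ∀ p : Term S ar A.carrier × Term S ar A.carrier, ∃ B : Alg S ar, B ∈ K ∧
        ∃ h : A.carrier → B.carrier,
        (B.eval h p.1 = B.eval h p.2 → ∀ B' ∈ K, B'.Satisfies p.1 p.2) := by
      intro p
      by_cases hc : ∀ B' ∈ K, B'.Satisfies p.1 p.2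
      · exact ⟨_, hB0, fun _ i => i.elim, fun _ => hc⟩
      · push_neg at hc
        obtain ⟨B', hB', hns⟩ := hc
        rw [Alg.Satisfies] at hns
        push_neg at hns
        obtain ⟨h, hne⟩ := hns
        exact ⟨B', hB', h, fun he => absurd he hne⟩
    choose B hBK h hkey using hW
    set P := prodAlg B with hPdef
    have hPK : P ∈ K := hP _ B hBK
    set φ : Term S ar A.carrier → P.carrier := fun t p => (B p).eval (h p) t with hφdef
    have hφhom : ∀ (s : S) (v : Fin (ar s) → Term S ar A.carrier),
        φ (Term.op s v) = P.op s fun i => φ (v i) := fun s v => rfl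
    have star : ∀ s t : Term S ar A.carrier, φ s = φ t → A.eval id s = A.eval id t := by
      intro s t hst
      exact hA ⟨A.carrier, (s, t)⟩ (hkey (s, t) (congrFun hst (s, t))) id
    set M : Alg S ar :=
      { carrier := { y : P.carrier // ∃ t, φ t = y },
        op := fun s v => ⟨P.op s fun i => (v i).1,
          Term.op s (fun i => Classical.choose (v i).2), by
            rw [hφhom]
            exact congrArg _ (funext fun i => Classical.choose_spec (v i).2)⟩ } with hMdef
    have hMK : M ∈ K := hS P hPK M ⟨Subtype.val, fun s v => rfl, Subtype.val_injective⟩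
    set ψ : M.carrier → A.carrier := fun y => A.eval id (Classical.choose y.2) with hψdef
    have hψ : ∀ (y : M.carrier) (t : Term S ar A.carrier), φ t = y.1 → ψ y = A.eval id t := by
      intro y t ht
      exact star _ _ ((Classical.choose_spec y.2).trans ht.symm)
    apply hH M hMK A
    refine ⟨ψ, ?_, ?_⟩
    · intro s v
      have h1 : ψ (M.op s v) = A.eval id (Term.op s (fun i => Classical.choose (v i).2)) := by
        apply hψ
        rw [hφhom]
        exact congrArg _ (funext fun i => Classical.choose_spec (v i).2)
      rw [h1]
      show A.op s (fun i => A.eval id (Classical.choose (v i).2)) = _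
      rfl
    · intro a
      refine ⟨⟨φ (Term.var a), Term.var a, rfl⟩, ?_⟩
      exact hψ _ (Term.var a) rfl
  · rintro ⟨Eqs, hE⟩
    refine ⟨?_, ?_, ?_⟩
    · rintro A hA Bb ⟨f, hf, hsurj⟩
      rw [hE] at hA ⊢
      intro p hp hb
      set g : p.1 → A.carrier := fun x => Classical.choose (hsurj (hb x)) with hgdef
      have hfg : (fun x => f (g x)) = hb := funext fun x => Classical.choose_spec (hsurj (hb x))
      calc Bb.eval hb p.2.1 = f (A.eval g p.2.1) := by rw [eval_hom hf, hfg]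
        _ = f (A.eval g p.2.2) := by rw [hA p hp g]
        _ = Bb.eval hb p.2.2 := by rw [eval_hom hf, hfg]
    · rintro Bb hB A ⟨f, hf, hinj⟩
      rw [hE] at hB ⊢
      intro p hp ha
      apply hinj
      rw [eval_hom hf, eval_hom hf, hB p hp]
    · intro I f hf
      rw [hE]
      intro p hp hh
      funext i
      rw [prod_eval, prod_eval]
      exact (hE (f i)).mp (hf i) p hp _
end

section
/- Birkhoff's equational logic is complete: if Γ is a set of term equations over a set X and s, t ∈ T_Σ X with Γ ⊨ s = t, then Γ ⊢ s = t. -/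
universe u

variable {S : Type u} {ar : S → ℕ}

/-- A family `Θ` of sets of term equations, indexed by all variable sets, is
deductively closed if each component is an equivalence relation closed under the
Σ-operations, and the family is closed under substitution along Σ-homomorphisms of
term algebras. -/
def DeductivelyClosed (S : Type u) (ar : S → ℕ)
    (Θ : ∀ Y : Type u, Set (Term S ar Y × Term S ar Y)) : Prop :=
  (∀ Y : Type u, Equivalence fun s t : Term S ar Y => (s, t) ∈ Θ Y) ∧
  (∀ (Y : Type u) (σ : S) (v w : Fin (ar σ) → Term S ar Y),
      (∀ i, (v i, w i) ∈ Θ Y) → (Term.op σ v, Term.op σ w) ∈ Θ Y) ∧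
  (∀ (Y Z : Type u) (h : Term S ar Y → Term S ar Z),
      IsHom (termAlg S ar Y) (termAlg S ar Z) h →
      ∀ p ∈ Θ Y, (h p.1, h p.2) ∈ Θ Z)

/-- **Completeness of Birkhoff's equational logic**: if `Γ ⊨ s = t` then `Γ ⊢ s = t`,
where `Γ ⊢ s = t` means that `(s, t)` belongs to the `X`-component of every
deductively closed family containing `Γ` (i.e. to the least such family). -/
theorem birkhoff_completeness (S : Type u) (ar : S → ℕ) (X : Type u)
    (Γ : Set (Term S ar X × Term S ar X)) (s t : Term S ar X)
    (hsem : ∀ A : Alg S ar, (∀ p ∈ Γ, A.Satisfies p.1 p.2) → A.Satisfies s t) :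
    ∀ Θ : ∀ Y : Type u, Set (Term S ar Y × Term S ar Y),
      DeductivelyClosed S ar Θ → Γ ⊆ Θ X → (s, t) ∈ Θ X := by
  intro Θ hΘ hΓ
  obtain ⟨hequiv, hop, hsub⟩ := hΘ
  -- the quotient algebra
  letI setoid : Setoid (Term S ar X) := ⟨fun a b => (a, b) ∈ Θ X, hequiv X⟩
  let Q := Quotient setoid
  have mk_eq : ∀ a b : Term S ar X, (a, b) ∈ Θ X → (⟦a⟧ : Q) = ⟦b⟧ := fun a b h =>
    Quotient.sound h
  let A : Alg S ar :=
    { carrier := Q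
      op := fun σ v => ⟦Term.op σ fun i => (v i).out⟧ }
  -- substitution is a homomorphism of term algebras
  have sub_hom : ∀ g : X → Term S ar X,
      IsHom (termAlg S ar X) (termAlg S ar X) ((termAlg S ar X).eval g) := by
    intro g σ v
    rfl
  -- evaluation in the quotient is the class of the substituted term
  have eval_eq : ∀ (h : X → Q) (g : X → Term S ar X), (∀ x, (⟦g x⟧ : Q) = h x) →
      ∀ u : Term S ar X, A.eval h u = ⟦(termAlg S ar X).eval g u⟧ := by
    intro h g hg u
    induction u with
    | var x => exact (hg x).symm
    | op σ v ih =>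
      show A.op σ (fun i => A.eval h (v i)) = (⟦Term.op σ fun i => (termAlg S ar X).eval g (v i)⟧ : Q)
      have : ∀ i, A.eval h (v i) = ⟦(termAlg S ar X).eval g (v i)⟧ := ih
      apply mk_eq
      apply hop
      intro i
      have := Quotient.exact ((Quotient.out_eq (A.eval h (v i))).trans (this i))
      exact this
  -- the quotient algebra satisfies Γ
  have hsat : ∀ p ∈ Γ, A.Satisfies p.1 p.2 := by
    intro p hp h
    have key := hsub X X ((termAlg S ar X).eval fun x => (h x).out)
      (sub_hom _) p (hΓ hp)
    rw [eval_eq h (fun x => (h x).out) (fun x => Quotient.out_eq (h x)),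
        eval_eq h (fun x => (h x).out) (fun x => Quotient.out_eq (h x))]
    exact mk_eq _ _ key
  -- apply semantic validity with the canonical valuation
  have := hsem A hsat (fun x => (⟦Term.var x⟧ : Q))
  rw [eval_eq _ Term.var (fun x => rfl), eval_eq _ Term.var (fun x => rfl)] at this
  -- identity substitution is the identity
  have id_sub : ∀ u : Term S ar X, (termAlg S ar X).eval Term.var u = u := by
    intro u
    induction u with
    | var x => rfl
    | op σ v ih =>
      show Term.op σ (fun i => (termAlg S ar X).eval Term.var (v i)) = _
      simp [funext ih]
  rw [id_sub s, id_sub t] at this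
  exact Quotient.exact this
end

section
/- Let Σ be a signature with only finitely many operation symbols, each of finite arity. A class of finite Σ-algebras is a pseudovariety, i.e. closed under homomorphic images (codomains of surjective Σ-homomorphisms with domain in the class), subalgebras, and finite products of its members, if and only if there is a sequence (s_i = t_i)_{i<ω} of term equations (each over a finite set of variables) such that a finite Σ-algebra belongs to the class if and only if it eventually satisfies the sequence. -/
universe u

variable {S : Type u} {ar : S → ℕ}

/-- A finite Σ-algebra eventually satisfies a sequence of term equations if it
satisfies all but finitely many of them. -/
def EventuallySatisfies (A : Alg S ar)
    (seq : ℕ → Σ X : Type u, Term S ar X × Term S ar X) : Prop :=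
  ∃ i₀ : ℕ, ∀ i ≥ i₀, A.Satisfies (seq i).2.1 (seq i).2.2


/-! For each `n`, the product of all members of `K` with at most `n` elements, indexed also by all
assignments of `n` variables in them, is a finite member of `K`; the subalgebra `Fₙ` generated by
the generic assignment is the free `n`-generated algebra of these small members of `K`. The
multiplication table of the finite algebra `Fₙ`, written as term equations over `n` variables,
is a finite set of equations that holds in every member of `K` with at most `n` elements, while
every `n`-generated algebra satisfying it is a homomorphic image of `Fₙ`, hence lies in `K`.
Enumerating these finite tables for all `n` in one sequence, a finite algebra eventually satisfies
the sequence iff it satisfies the tables of all large `n`. (The empty algebra is in `K` as a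
subalgebra of the empty product.)
Conversely, eventual satisfaction passes to images and subalgebras, and to finite products since
finitely many thresholds have a common bound. -/

open Function Filter

theorem IsHom.map_eval {A B : Alg S ar} {f : A.carrier → B.carrier} (hf : IsHom A B f)
    {X : Type u} (h : X → A.carrier) : ∀ t : Term S ar X, f (A.eval h t) = B.eval (f ∘ h) t
  | .var _ => rfl
  | .op s v => (hf s _).trans <| congrArg (B.op s) <| funext fun i => hf.map_eval h (v i)

theorem prodAlg_eval_apply {I : Type u} (F : I → Alg S ar) {X : Type u}
    (h : X → (prodAlg F).carrier) (t : Term S ar X) (i : I) :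
    (prodAlg F).eval h t i = (F i).eval (fun x => h x i) t :=
  IsHom.map_eval (B := F i) (f := fun p : (prodAlg F).carrier => p i) (fun _ _ => rfl) h t

instance {I : Type u} [Finite I] (F : I → Alg S ar) [∀ i, Finite (F i).carrier] :
    Finite (prodAlg F).carrier :=
  Pi.finite

namespace Alg.Satisfies

variable {A B : Alg S ar} {f : A.carrier → B.carrier} {X : Type u} {t t' : Term S ar X}

theorem of_surjective (hf : IsHom A B f) (hsurj : Surjective f) (h : A.Satisfies t t') :
    B.Satisfies t t' := by
  intro g
  have hg : f ∘ (surjInv hsurj ∘ g) = g := funext fun x => surjInv_eq hsurj (g x)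
  rw [← hg, ← hf.map_eval, ← hf.map_eval, h]

theorem of_injective (hf : IsHom A B f) (hinj : Injective f) (h : B.Satisfies t t') :
    A.Satisfies t t' :=
  fun g => hinj <| by rw [hf.map_eval, hf.map_eval, h]

theorem prodAlg {I : Type u} {F : I → Alg S ar} (h : ∀ i, (F i).Satisfies t t') :
    (prodAlg F).Satisfies t t' :=
  fun g => funext fun i => by rw [prodAlg_eval_apply, prodAlg_eval_apply, h i]

end Alg.Satisfies

section EventuallySatisfies

variable {A B : Alg S ar} {f : A.carrier → B.carrier}
  {seq : ℕ → Σ X : Type u, Term S ar X × Term S ar X}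

theorem eventuallySatisfies_iff :
    EventuallySatisfies A seq ↔ ∀ᶠ i in atTop, A.Satisfies (seq i).2.1 (seq i).2.2 :=
  eventually_atTop.symm

theorem EventuallySatisfies.of_surjective (hf : IsHom A B f) (hsurj : Surjective f)
    (h : EventuallySatisfies A seq) : EventuallySatisfies B seq :=
  let ⟨i₀, hi⟩ := h
  ⟨i₀, fun i hi₀ => (hi i hi₀).of_surjective hf hsurj⟩

theorem EventuallySatisfies.of_injective (hf : IsHom A B f) (hinj : Injective f)
    (h : EventuallySatisfies B seq) : EventuallySatisfies A seq :=
  let ⟨i₀, hi⟩ := h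
  ⟨i₀, fun i hi₀ => (hi i hi₀).of_injective hf hinj⟩

theorem EventuallySatisfies.prodAlg {I : Type u} [Finite I] {F : I → Alg S ar}
    (h : ∀ i, EventuallySatisfies (F i) seq) : EventuallySatisfies (prodAlg F) seq := by
  simp only [eventuallySatisfies_iff] at h ⊢
  exact (eventually_all.2 h).mono fun _ => Alg.Satisfies.prodAlg

end EventuallySatisfies

structure IsPseudovariety (K : Set (Alg S ar)) : Prop where
  mem_of_surjective {A B : Alg S ar} {f : A.carrier → B.carrier} :
    A ∈ K → IsHom A B f → Surjective f → B ∈ K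
  mem_of_injective {A B : Alg S ar} {f : A.carrier → B.carrier} :
    B ∈ K → IsHom A B f → Injective f → A ∈ K
  prodAlg_mem {I : Type u} [Finite I] {F : I → Alg S ar} : (∀ i, F i ∈ K) → prodAlg F ∈ K

theorem isPseudovariety_of_forall_mem_iff {K : Set (Alg S ar)}
    {seq : ℕ → Σ X : Type u, Term S ar X × Term S ar X} (hKfin : ∀ A ∈ K, Finite A.carrier)
    (hK : ∀ A : Alg S ar, Finite A.carrier → (A ∈ K ↔ EventuallySatisfies A seq)) :
    IsPseudovariety K where
  mem_of_surjective {A B f} hA hf hsurj :=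
    have := hKfin A hA
    (hK B (.of_surjective f hsurj)).2 (((hK A this).1 hA).of_surjective hf hsurj)
  mem_of_injective {A B f} hB hf hinj :=
    have := hKfin B hB
    (hK A (.of_injective f hinj)).2 (((hK B this).1 hB).of_injective hf hinj)
  prodAlg_mem hF :=
    have := fun i => hKfin _ (hF i)
    (hK _ inferInstance).2 (.prodAlg fun i => (hK _ (this i)).1 (hF i))

theorem IsPseudovariety.mem_of_isEmpty {K : Set (Alg S ar)} (hK : IsPseudovariety K)
    (A : Alg S ar) [IsEmpty A.carrier] : A ∈ K :=
  hK.mem_of_injective (hK.prodAlg_mem (I := PEmpty) (F := fun _ => A) isEmptyElim)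
    (f := isEmptyElim) (fun s v => isEmptyElim (A.op s v)) fun a => isEmptyElim a

def Alg.transfer (A : Alg S ar) {β : Type u} (e : A.carrier ≃ β) : Alg S ar where
  carrier := β
  op s v := e (A.op s (e.symm ∘ v))

theorem Alg.isHom_transfer (A : Alg S ar) {β : Type u} (e : A.carrier ≃ β) :
    IsHom A (A.transfer e) e := by
  intro s v
  simp [Alg.transfer, comp_def]

namespace Alg

variable (C : Alg S ar) {X : Type u} (g : X → C.carrier)

def evalRange : Alg S ar where
  carrier := Set.range (C.eval g)
  op s v := ⟨C.op s fun i => (v i).1, .op s fun i => (v i).2.choose,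
    congrArg (C.op s) <| funext fun i => (v i).2.choose_spec⟩

instance [Finite C.carrier] : Finite (C.evalRange g).carrier :=
  Subtype.finite

theorem isHom_evalRange_val : IsHom (C.evalRange g) C Subtype.val :=
  fun _ _ => rfl

noncomputable def termOf (r : (C.evalRange g).carrier) : Term S ar X :=
  r.2.choose

theorem eval_termOf (r : (C.evalRange g).carrier) : C.eval g (C.termOf g r) = r.1 :=
  r.2.choose_spec

abbrev PresentationIdx : Type u :=
  X ⊕ Σ s : S, Fin (ar s) → (C.evalRange g).carrier

/-- The multiplication table of `C.evalRange g` as term equations over `X`, with every element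
named by its chosen term `termOf`. -/
noncomputable def presentation : C.PresentationIdx g → Term S ar X × Term S ar X
  | .inl x => (.var x, C.termOf g ⟨g x, .var x, rfl⟩)
  | .inr ⟨s, p⟩ => (.op s fun i => C.termOf g (p i), C.termOf g ((C.evalRange g).op s p))

theorem eval_presentation :
    ∀ γ, C.eval g (C.presentation g γ).1 = C.eval g (C.presentation g γ).2
  | .inl x => (C.eval_termOf g ⟨g x, _⟩).symm
  | .inr ⟨s, p⟩ => by
    rw [presentation, eval_termOf]
    exact congrArg (C.op s) <| funext fun i => C.eval_termOf g (p i)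

theorem exists_surjective_isHom_evalRange {A : Alg S ar} {g' : X → A.carrier}
    (hg' : Surjective g')
    (h : ∀ γ, A.eval g' (C.presentation g γ).1 = A.eval g' (C.presentation g γ).2) :
    ∃ f, IsHom (C.evalRange g) A f ∧ Surjective f := by
  -- The `.inr` equations make `r ↦ A.eval g' (termOf r)` a homomorphism; the `.inl` ones make
  -- it hit every generator.
  refine ⟨fun r => A.eval g' (C.termOf g r), fun s p => (h (.inr ⟨s, p⟩)).symm, fun a => ?_⟩
  obtain ⟨x, rfl⟩ := hg' a
  exact ⟨_, (h (.inl x)).symm⟩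

end Alg

section SmallMembers

variable (K : Set (Alg S ar)) (n : ℕ)

/-- The members of `K` with at most `n` elements, up to isomorphism, each paired with an
assignment of `n` variables. -/
abbrev SmallInstance : Type u :=
  Σ k : Fin (n + 1),
    {op : (s : S) → (Fin (ar s) → ULift.{u} (Fin k)) → ULift.{u} (Fin k) // ⟨_, op⟩ ∈ K} ×
      (ULift.{u} (Fin n) → ULift.{u} (Fin k))

def SmallInstance.alg {K : Set (Alg S ar)} {n : ℕ} (i : SmallInstance K n) : Alg S ar :=
  ⟨ULift (Fin i.1), i.2.1.1⟩

def smallProd : Alg S ar :=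
  prodAlg (SmallInstance.alg (K := K) (n := n))

def smallGen : ULift.{u} (Fin n) → (smallProd K n).carrier :=
  fun x i => i.2.2 x

instance [Finite S] : Finite (smallProd K n).carrier :=
  inferInstanceAs (Finite (∀ i : SmallInstance K n, ULift (Fin i.1)))

variable {K n}

theorem satisfies_of_eval_smallGen_eq {t t' : Term S ar (ULift.{u} (Fin n))}
    (h : (smallProd K n).eval (smallGen K n) t = (smallProd K n).eval (smallGen K n) t')
    {k : ℕ} (hk : k ≤ n) {op : (s : S) → (Fin (ar s) → ULift.{u} (Fin k)) → ULift.{u} (Fin k)}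
    (hop : ⟨_, op⟩ ∈ K) : (⟨_, op⟩ : Alg S ar).Satisfies t t' := by
  intro g
  have hi := congrFun h ⟨⟨k, Nat.lt_succ_of_le hk⟩, ⟨op, hop⟩, g⟩
  exact (prodAlg_eval_apply _ _ t _).symm.trans (hi.trans (prodAlg_eval_apply _ _ t' _))

theorem IsPseudovariety.satisfies_presentation (hK : IsPseudovariety K) {B : Alg S ar}
    (hB : B ∈ K) [Finite B.carrier] (hcard : Nat.card B.carrier ≤ n)
    (γ : (smallProd K n).PresentationIdx (smallGen K n)) :
    B.Satisfies ((smallProd K n).presentation (smallGen K n) γ).1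
      ((smallProd K n).presentation (smallGen K n) γ).2 := by
  let e : B.carrier ≃ ULift.{u} (Fin (Nat.card B.carrier)) :=
    (Finite.equivFin B.carrier).trans Equiv.ulift.symm
  have he := B.isHom_transfer e
  have hBe : B.transfer e ∈ K := hK.mem_of_surjective hB he e.surjective
  exact (satisfies_of_eval_smallGen_eq ((smallProd K n).eval_presentation _ γ) hcard hBe
    ).of_injective he e.injective

theorem IsPseudovariety.mem_of_eval_presentation [Finite S] (hK : IsPseudovariety K)
    {A : Alg S ar} {g : ULift.{u} (Fin n) → A.carrier} (hg : Surjective g)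
    (h : ∀ γ, A.eval g ((smallProd K n).presentation (smallGen K n) γ).1 =
      A.eval g ((smallProd K n).presentation (smallGen K n) γ).2) : A ∈ K := by
  obtain ⟨f, hf, hsurj⟩ := (smallProd K n).exists_surjective_isHom_evalRange _ hg h
  have hP : smallProd K n ∈ K := hK.prodAlg_mem fun i => i.2.1.2
  exact hK.mem_of_surjective (hK.mem_of_injective hP ((smallProd K n).isHom_evalRange_val _)
    Subtype.val_injective) hf hsurj

end SmallMembers

theorem Equiv.tendsto_fst_atTop {E : ℕ → Type*} [∀ n, Finite (E n)] (e : ℕ ≃ Σ n, E n) :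
    Tendsto (fun k => (e k).1) atTop atTop := by
  have hfib : ∀ n, Finite (Sigma.fst ⁻¹' {n} : Set (Σ n, E n)) := fun n =>
    Finite.of_surjective (fun γ : E n => ⟨⟨n, γ⟩, rfl⟩) (by rintro ⟨⟨_, γ⟩, rfl⟩; exact ⟨γ, rfl⟩)
  rw [← Nat.cofinite_eq_atTop]
  exact (Tendsto.cofinite_of_finite_preimage_singleton hfib).comp e.injective.tendsto_cofinite

theorem Equiv.eventually_le_symm {E : ℕ → Type*} (e : ℕ ≃ Σ n, E n) (k₀ : ℕ) :
    ∀ᶠ n in atTop, ∀ γ, k₀ ≤ e.symm ⟨n, γ⟩ := by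
  filter_upwards [eventually_all.2 fun k : Fin k₀ => eventually_ne_atTop (e k).1] with n hn γ
  by_contra! hlt
  exact hn ⟨_, hlt⟩ (by simp)

theorem exists_seq_eventuallySatisfies_iff {E : ℕ → Type u} [∀ n, Finite (E n)]
    (eqs : ∀ n, E n → Σ X : Type u, Term S ar X × Term S ar X)
    (hfin : ∀ n γ, Finite (eqs n γ).1) :
    ∃ seq : ℕ → Σ X : Type u, Term S ar X × Term S ar X, (∀ i, Finite (seq i).1) ∧
      ∀ A : Alg S ar, EventuallySatisfies A seq ↔
        ∀ᶠ n in atTop, ∀ γ, A.Satisfies (eqs n γ).2.1 (eqs n γ).2.2 := by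
  -- `none` stands for the trivial equation `x = x`, so that the index type is infinite.
  let eqOf : (Σ n, Option (E n)) → Σ X : Type u, Term S ar X × Term S ar X := fun q =>
    q.2.elim ⟨PUnit, .var .unit, .var .unit⟩ (eqs q.1)
  obtain ⟨hden⟩ := nonempty_denumerable (Σ n, Option (E n))
  let e := (Denumerable.eqv (Σ n, Option (E n))).symm
  refine ⟨fun k => eqOf (e k), fun k => ?_, fun A => ?_⟩
  · show Finite (eqOf (e k)).1
    rcases e k with ⟨n, _ | γ⟩
    exacts [inferInstanceAs (Finite PUnit.{u + 1}), hfin n γ]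
  rw [eventuallySatisfies_iff]
  constructor
  · intro h
    obtain ⟨k₀, hk₀⟩ := eventually_atTop.1 h
    filter_upwards [e.eventually_le_symm k₀] with n hn γ
    have hγ := hk₀ _ (hn (some γ))
    rwa [e.apply_symm_apply] at hγ
  · intro h
    filter_upwards [e.tendsto_fst_atTop.eventually h] with k hk
    match e k, hk with
    | ⟨_, none⟩, _ => exact fun _ => rfl
    | ⟨_, some γ⟩, hk => exact hk γ

theorem IsPseudovariety.exists_seq [Finite S] {K : Set (Alg S ar)} (hK : IsPseudovariety K) :
    ∃ seq : ℕ → Σ X : Type u, Term S ar X × Term S ar X, (∀ i, Finite (seq i).1) ∧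
      ∀ A : Alg S ar, Finite A.carrier → (A ∈ K ↔ EventuallySatisfies A seq) := by
  obtain ⟨seq, hfin, hseq⟩ := exists_seq_eventuallySatisfies_iff
    (fun n γ => ⟨ULift.{u} (Fin n), (smallProd K n).presentation (smallGen K n) γ⟩)
    fun n _ => inferInstanceAs (Finite (ULift (Fin n)))
  refine ⟨seq, hfin, fun A hA => ?_⟩
  rw [hseq]
  constructor
  · intro hAK
    filter_upwards [eventually_ge_atTop (Nat.card A.carrier)] with n hn γ
    exact hK.satisfies_presentation hAK hn γ
  · intro h
    cases isEmpty_or_nonempty A.carrier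
    · exact hK.mem_of_isEmpty A
    obtain ⟨n, hsat, hn⟩ := (h.and (eventually_ge_atTop (Nat.card A.carrier))).exists
    have : Fintype A.carrier := .ofFinite _
    obtain ⟨e⟩ : Nonempty (A.carrier ↪ ULift.{u} (Fin n)) :=
      Function.Embedding.nonempty_of_card_le (by simpa [Nat.card_eq_fintype_card] using hn)
    exact hK.mem_of_eval_presentation (invFun_surjective e.injective) fun γ => hsat γ _

/-- **Eilenberg–Schützenberger Theorem**: for a signature with finitely many
operation symbols, a class of finite Σ-algebras is a pseudovariety (closed under
homomorphic images, subalgebras and finite products) iff it is axiomatizable by a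
sequence of term equations, each over a finite set of variables, where a finite
algebra belongs to the class iff it eventually satisfies the sequence. -/
theorem eilenberg_schutzenberger (S : Type u) (ar : S → ℕ) (hS : Finite S)
    (K : Set (Alg S ar)) (hKfin : ∀ A ∈ K, Finite A.carrier) :
    ((∀ A ∈ K, ∀ B : Alg S ar,
        (∃ f : A.carrier → B.carrier, IsHom A B f ∧ Function.Surjective f) → B ∈ K) ∧
     (∀ B ∈ K, ∀ A : Alg S ar,
        (∃ f : A.carrier → B.carrier, IsHom A B f ∧ Function.Injective f) → A ∈ K) ∧
     (∀ (I : Type u), Finite I → ∀ f : I → Alg S ar, (∀ i, f i ∈ K) → prodAlg f ∈ K)) ↔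
    ∃ seq : ℕ → Σ X : Type u, Term S ar X × Term S ar X,
      (∀ i, Finite (seq i).1) ∧
      ∀ A : Alg S ar, Finite A.carrier → (A ∈ K ↔ EventuallySatisfies A seq) := by
  constructor
  · rintro ⟨hH, hSub, hP⟩
    exact IsPseudovariety.exists_seq
      { mem_of_surjective := fun hA hf hsurj => hH _ hA _ ⟨_, hf, hsurj⟩
        mem_of_injective := fun hB hf hinj => hSub _ hB _ ⟨_, hf, hinj⟩
        prodAlg_mem := fun hF => hP _ inferInstance _ hF }
  · rintro ⟨seq, -, hseq⟩
    have hK := isPseudovariety_of_forall_mem_iff hKfin hseq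
    exact ⟨fun A hA B ⟨f, hf, hsurj⟩ => hK.mem_of_surjective hA hf hsurj,
      fun B hB A ⟨f, hf, hinj⟩ => hK.mem_of_injective hB hf hinj,
      fun I _ F hF => hK.prodAlg_mem hF⟩
end

section
/- Let A be an ordered Σ-algebra. (1) For every surjective monotone Σ-homomorphism e : A → B, the relation ⪯_e defined by a ⪯_e a' iff e(a) ≤_B e(a') is a stable preorder on A. (2) Every stable preorder on A is of the form ⪯_e for some surjective monotone Σ-homomorphism e with domain A. (3) For surjective monotone Σ-homomorphisms e : A → B and f : A → C, there exists a monotone Σ-homomorphism g : B → C with f = g ∘ e if and only if ⪯_e is contained in ⪯_f. -/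
universe u

/-- An ordered Σ-algebra: a partially ordered set with monotone `ar s`-ary
operations. -/
structure OrdAlg (S : Type u) (ar : S → ℕ) : Type (u + 1) where
  carrier : Type u
  po : PartialOrder carrier
  op : (s : S) → (Fin (ar s) → carrier) → carrier
  op_mono : ∀ (s : S) (v w : Fin (ar s) → carrier),
      (∀ i, po.le (v i) (w i)) → po.le (op s v) (op s w)

variable {S : Type u} {ar : S → ℕ}

/-- The unique homomorphic extension `h#` of `h : X → A` to the term algebra. -/
def OrdAlg.eval (A : OrdAlg S ar) {X : Type u} (h : X → A.carrier) :
    Term S ar X → A.carrier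
  | Term.var x => h x
  | Term.op s v => A.op s fun i => A.eval h (v i)

/-- A monotone Σ-homomorphism of ordered Σ-algebras. -/
def OrdHom (A B : OrdAlg S ar) (f : A.carrier → B.carrier) : Prop :=
  (∀ (s : S) (v : Fin (ar s) → A.carrier), f (A.op s v) = B.op s fun i => f (v i)) ∧
  (∀ x y : A.carrier, A.po.le x y → B.po.le (f x) (f y))

/-- An ordered Σ-algebra satisfies the term inequation `s ≤ t` over `X` if all
evaluations are related. -/
def OrdAlg.SatisfiesLE (A : OrdAlg S ar) {X : Type u} (s t : Term S ar X) : Prop :=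
  ∀ h : X → A.carrier, A.po.le (A.eval h s) (A.eval h t)

/-- The product of a family of ordered Σ-algebras, with pointwise order and
operations. -/
def prodOrdAlg {I : Type u} (f : I → OrdAlg S ar) : OrdAlg S ar where
  carrier := ∀ i, (f i).carrier
  po :=
    { le := fun x y => ∀ i, (f i).po.le (x i) (y i)
      le_refl := fun x i => (f i).po.le_refl (x i)
      le_trans := fun x y z hxy hyz i => (f i).po.le_trans _ _ _ (hxy i) (hyz i)
      le_antisymm := fun x y hxy hyx => funext fun i => (f i).po.le_antisymm _ _ (hxy i) (hyx i) }
  op := fun s v i => (f i).op s fun j => v j i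
  op_mono := fun s v w h i => (f i).op_mono s _ _ fun j => h j i

/-- A stable preorder on an ordered Σ-algebra `A`: a preorder refining the order of
`A` such that all Σ-operations are monotone with respect to it. -/
def StablePreorder (A : OrdAlg S ar) (r : A.carrier → A.carrier → Prop) : Prop :=
  (∀ x, r x x) ∧ (∀ x y z, r x y → r y z → r x z) ∧
  (∀ x y, A.po.le x y → r x y) ∧
  (∀ (s : S) (v w : Fin (ar s) → A.carrier), (∀ i, r (v i) (w i)) → r (A.op s v) (A.op s w))

/-- Exactness for ordered Σ-algebras: (1) the kernel preorder `⪯_e` of a surjective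
monotone Σ-homomorphism `e` is stable; (2) every stable preorder arises this way;
(3) homomorphism theorem: `f` factors through `e` iff `⪯_e ⊆ ⪯_f`. -/
theorem stable_preorder_correspondence (S : Type u) (ar : S → ℕ) (A : OrdAlg S ar) :
    (∀ (B : OrdAlg S ar) (e : A.carrier → B.carrier), OrdHom A B e → Function.Surjective e →
      StablePreorder A fun a a' => B.po.le (e a) (e a')) ∧
    (∀ r : A.carrier → A.carrier → Prop, StablePreorder A r →
      ∃ (B : OrdAlg S ar) (e : A.carrier → B.carrier), OrdHom A B e ∧ Function.Surjective e ∧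
        ∀ a a', r a a' ↔ B.po.le (e a) (e a')) ∧
    (∀ (B C : OrdAlg S ar) (e : A.carrier → B.carrier) (f : A.carrier → C.carrier),
      OrdHom A B e → Function.Surjective e → OrdHom A C f → Function.Surjective f →
      ((∃ g : B.carrier → C.carrier, OrdHom B C g ∧ ∀ a, g (e a) = f a) ↔
        ∀ a a', B.po.le (e a) (e a') → C.po.le (f a) (f a'))) := by
  refine ⟨?_, ?_, ?_⟩
  · intro B e he hsur
    obtain ⟨hop, hmono⟩ := he
    refine ⟨fun x => B.po.le_refl _, fun x y z => B.po.le_trans _ _ _,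
      fun x y h => hmono x y h, fun s v w h => ?_⟩
    show B.po.le (e (A.op s v)) (e (A.op s w))
    rw [hop, hop]
    exact B.op_mono s _ _ h
  · intro r hr
    obtain ⟨hrefl, htrans, hle, hop⟩ := hr
    let st : Setoid A.carrier :=
      ⟨fun x y => r x y ∧ r y x,
        ⟨fun x => ⟨hrefl x, hrefl x⟩, fun h => ⟨h.2, h.1⟩,
          fun h1 h2 => ⟨htrans _ _ _ h1.1 h2.1, htrans _ _ _ h2.2 h1.2⟩⟩⟩
    let le' : Quotient st → Quotient st → Prop := Quotient.lift₂ r (by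
      intro a b a' b' ha hb
      exact propext ⟨fun h => htrans _ _ _ ha.2 (htrans _ _ _ h hb.1),
        fun h => htrans _ _ _ ha.1 (htrans _ _ _ h hb.2)⟩)
    let B : OrdAlg S ar := {
      carrier := Quotient st
      po := {
        le := le'
        le_refl := fun q => Quotient.inductionOn q (fun a => hrefl a)
        le_trans := fun x y z => Quotient.inductionOn₃ x y z
          (fun a b c hab hbc => htrans a b c hab hbc)
        le_antisymm := fun x y => Quotient.inductionOn₂ x y
          (fun a b hab hba => Quotient.sound ⟨hab, hba⟩) }
      op := fun s v => Quotient.mk st (A.op s fun i => (v i).out)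
      op_mono := fun s v w h => hop s _ _ fun i => by
        have hi := h i
        rw [← (v i).out_eq, ← (w i).out_eq] at hi
        exact hi }
    refine ⟨B, Quotient.mk st, ⟨fun s v => ?_, fun x y h => hle x y h⟩,
      fun q => ⟨q.out, q.out_eq⟩, fun a a' => Iff.rfl⟩
    have hmo : ∀ i, st.r (Quotient.mk st (v i)).out (v i) :=
      fun i => @Quotient.exact _ st _ _ ((Quotient.mk st (v i)).out_eq)
    refine Quotient.sound ?_
    constructor
    · exact hop s _ _ fun i => (hmo i).2
    · exact hop s _ _ fun i => (hmo i).1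
  · intro B C e f he hesur hf hfsur
    constructor
    · rintro ⟨g, ⟨_, gmono⟩, hg⟩ a a' h
      have := gmono _ _ h
      rwa [hg, hg] at this
    · intro h
      choose sec hsec using hesur
      have key : ∀ a b, e a = e b → f a = f b := by
        intro a b hab
        exact C.po.le_antisymm _ _ (h a b (hab ▸ B.po.le_refl _))
          (h b a (hab ▸ B.po.le_refl _))
      refine ⟨fun b => f (sec b), ⟨fun s v => ?_, fun x y hxy => ?_⟩, fun a => key _ _ (hsec _)⟩
      · have h1 : e (A.op s fun i => sec (v i)) = B.op s v := by
          rw [he.1]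
          congr 1
          funext i
          exact hsec (v i)
        have h2 : f (sec (B.op s v)) = f (A.op s fun i => sec (v i)) :=
          key _ _ (by rw [hsec, h1])
        show f (sec (B.op s v)) = C.op s fun i => f (sec (v i))
        rw [h2, hf.1]
      · have hx : e (sec x) = x := hsec x
        have hy : e (sec y) = y := hsec y
        exact h _ _ (by rw [hx, hy]; exact hxy)
end

section
/- Let A be a quantitative Σ-algebra. (1) For every surjective nonexpansive Σ-homomorphism e : A → B of quantitative Σ-algebras, the map p_e(a, a') := d_B(e(a), e(a')) is a congruence on A. (2) Every congruence p on A equals p_e for some surjective nonexpansive Σ-homomorphism e with domain A. (3) Homomorphism theorem: for a surjective nonexpansive Σ-homomorphism e : A → B and an arbitrary nonexpansive Σ-homomorphism f : A → C, there exists a nonexpansive Σ-homomorphism g : B → C with f = g ∘ e if and only if d_C(f(a), f(a')) ≤ d_B(e(a), e(a')) for all a, a' ∈ A. -/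
open ENNReal

universe u

/-- A quantitative Σ-algebra: an extended metric space (distances in `[0,∞]`) with
Σ-operations that are nonexpansive with respect to the sup-metric. -/
structure QAlg (S : Type u) (ar : S → ℕ) : Type (u + 1) where
  carrier : Type u
  d : carrier → carrier → ℝ≥0∞
  d_eq_zero : ∀ a b : carrier, d a b = 0 ↔ a = b
  d_symm : ∀ a b : carrier, d a b = d b a
  d_triangle : ∀ a b c : carrier, d a c ≤ d a b + d b c
  op : (s : S) → (Fin (ar s) → carrier) → carrier
  op_nonexpansive : ∀ (s : S) (v w : Fin (ar s) → carrier),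
      d (op s v) (op s w) ≤ ⨆ i, d (v i) (w i)

variable {S : Type u} {ar : S → ℕ}

/-- The unique homomorphic extension `h#` of `h : X → A` to the term algebra. -/
def QAlg.eval (A : QAlg S ar) {X : Type u} (h : X → A.carrier) :
    Term S ar X → A.carrier
  | Term.var x => h x
  | Term.op s v => A.op s fun i => A.eval h (v i)

/-- A nonexpansive Σ-homomorphism of quantitative Σ-algebras. -/
def QHom (A B : QAlg S ar) (f : A.carrier → B.carrier) : Prop :=
  (∀ (s : S) (v : Fin (ar s) → A.carrier), f (A.op s v) = B.op s fun i => f (v i)) ∧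
  (∀ a a' : A.carrier, B.d (f a) (f a') ≤ A.d a a')

/-- A congruence on a quantitative Σ-algebra `A`: an extended pseudometric below the
metric of `A` making all Σ-operations nonexpansive. -/
def IsCongruence (A : QAlg S ar) (p : A.carrier → A.carrier → ℝ≥0∞) : Prop :=
  (∀ a, p a a = 0) ∧ (∀ a b, p a b = p b a) ∧ (∀ a b c, p a c ≤ p a b + p b c) ∧
  (∀ a b, p a b ≤ A.d a b) ∧
  (∀ (s : S) (v w : Fin (ar s) → A.carrier),
      p (A.op s v) (A.op s w) ≤ ⨆ i, p (v i) (w i))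

/-!
The kernel of a homomorphism `e` is a congruence because `e` carries the operations of `A`
to those of `B`. Conversely, a congruence `p` is the kernel of the projection onto `A`
modulo `p = 0`, metrised by `p`: by the triangle inequality `p` is constant on classes, and
by nonexpansiveness of the operations so are they. A factorisation of `f` through a
surjection `e` can only be `f ∘ e⁻¹`, which is well defined and nonexpansive exactly when
`d_C (f a) (f a') ≤ d_B (e a) (e a')`.
-/

namespace QHom

variable {A B C : QAlg S ar} {e : A.carrier → B.carrier} {f : A.carrier → C.carrier}

theorem isCongruence (he : QHom A B e) : IsCongruence A fun a a' => B.d (e a) (e a') := by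
  refine ⟨fun _ => (B.d_eq_zero _ _).mpr rfl, fun _ _ => B.d_symm _ _,
    fun _ _ _ => B.d_triangle _ _ _, he.2, fun s v w => ?_⟩
  dsimp only
  rw [he.1, he.1]
  exact B.op_nonexpansive _ _ _

theorem eq_of_dist_le (hd : ∀ a a', C.d (f a) (f a') ≤ B.d (e a) (e a')) {a a' : A.carrier}
    (h : e a = e a') : f a = f a' := by
  refine (C.d_eq_zero _ _).mp (nonpos_iff_eq_zero.mp ?_)
  simpa [h, (B.d_eq_zero _ _).mpr] using hd a a'

theorem exists_factor_of_dist_le (he : QHom A B e) (hsurj : Function.Surjective e)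
    (hf : QHom A C f) (hd : ∀ a a', C.d (f a) (f a') ≤ B.d (e a) (e a')) :
    ∃ g : B.carrier → C.carrier, QHom B C g ∧ ∀ a, g (e a) = f a := by
  set r := Function.surjInv hsurj
  have hr : ∀ b, e (r b) = b := Function.surjInv_eq hsurj
  have hfactor : ∀ a, f (r (e a)) = f a := fun a => eq_of_dist_le hd (hr (e a))
  refine ⟨f ∘ r, ⟨fun s v => ?_, fun b b' => ?_⟩, hfactor⟩
  · calc f (r (B.op s v))
        = f (r (e (A.op s fun i => r (v i)))) := by rw [he.1]; simp only [hr]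
      _ = C.op s fun i => f (r (v i)) := by rw [hfactor, hf.1]
  · simpa only [Function.comp_apply, hr] using hd (r b) (r b')

theorem exists_factor_iff (he : QHom A B e) (hsurj : Function.Surjective e) (hf : QHom A C f) :
    (∃ g : B.carrier → C.carrier, QHom B C g ∧ ∀ a, g (e a) = f a) ↔
      ∀ a a', C.d (f a) (f a') ≤ B.d (e a) (e a') := by
  refine ⟨?_, exists_factor_of_dist_le he hsurj hf⟩
  rintro ⟨g, hg, hgf⟩ a a'
  rw [← hgf a, ← hgf a']
  exact hg.2 _ _

end QHom

namespace IsCongruence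

variable {A : QAlg S ar} {p : A.carrier → A.carrier → ℝ≥0∞}

theorem apply_eq_of_eq_zero (hp : IsCongruence A p) {a a' b b' : A.carrier}
    (ha : p a a' = 0) (hb : p b b' = 0) : p a b = p a' b' := by
  have key : ∀ {x x' y y'}, p x x' = 0 → p y y' = 0 → p x' y' ≤ p x y := by
    intro x x' y y' hx hy
    calc p x' y' ≤ p x' x + (p x y + p y y') :=
          (hp.2.2.1 _ _ _).trans (add_le_add_right (hp.2.2.1 _ _ _) _)
      _ = p x y := by rw [hp.2.1, hx, hy, zero_add, add_zero]
  exact le_antisymm (key (hp.2.1 a' a ▸ ha) (hp.2.1 b' b ▸ hb)) (key ha hb)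

def setoid (hp : IsCongruence A p) : Setoid A.carrier where
  r a b := p a b = 0
  iseqv := ⟨hp.1, fun h => (hp.2.1 _ _).trans h,
    fun hab hbc => (hp.apply_eq_of_eq_zero hab (hp.1 _)).trans hbc⟩

theorem op_eq_zero (hp : IsCongruence A p) {s : S} {v w : Fin (ar s) → A.carrier}
    (h : ∀ i, p (v i) (w i) = 0) : p (A.op s v) (A.op s w) = 0 :=
  nonpos_iff_eq_zero.mp ((hp.2.2.2.2 s v w).trans (by simp [h]))

def quotient (hp : IsCongruence A p) : QAlg S ar where
  carrier := Quotient hp.setoid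
  d := Quotient.lift₂ p fun _ _ _ _ ha hb => hp.apply_eq_of_eq_zero ha hb
  d_eq_zero := by
    rintro ⟨a⟩ ⟨b⟩
    exact (Quotient.eq (r := hp.setoid)).symm
  d_symm := by
    rintro ⟨a⟩ ⟨b⟩
    exact hp.2.1 a b
  d_triangle := by
    rintro ⟨a⟩ ⟨b⟩ ⟨c⟩
    exact hp.2.2.1 a b c
  op s v := Quotient.finLiftOn v (fun w => Quotient.mk hp.setoid (A.op s w))
    fun _ _ h => Quotient.sound (hp.op_eq_zero h)
  op_nonexpansive s v w := by
    induction v using Quotient.induction_on_fintype_pi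
    induction w using Quotient.induction_on_fintype_pi
    simp only [Quotient.finLiftOn_mk]
    exact hp.2.2.2.2 s _ _

theorem qHom_mk (hp : IsCongruence A p) : QHom A hp.quotient (Quotient.mk hp.setoid) := by
  refine ⟨fun s v => ?_, hp.2.2.2.1⟩
  change _ = Quotient.finLiftOn (fun i => Quotient.mk hp.setoid (v i)) _ _
  rw [Quotient.finLiftOn_mk]

end IsCongruence

/-- Exactness for quantitative Σ-algebras: (1) the kernel pseudometric `p_e` of a
surjective nonexpansive Σ-homomorphism `e` is a congruence; (2) every congruence
arises this way; (3) homomorphism theorem: `f` factors through a surjective `e` iff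
`d_C(f a, f a') ≤ d_B(e a, e a')` for all `a, a'`. -/
theorem quantitative_congruence_correspondence (S : Type u) (ar : S → ℕ)
    (A : QAlg S ar) :
    (∀ (B : QAlg S ar) (e : A.carrier → B.carrier), QHom A B e → Function.Surjective e →
      IsCongruence A fun a a' => B.d (e a) (e a')) ∧
    (∀ p : A.carrier → A.carrier → ℝ≥0∞, IsCongruence A p →
      ∃ (B : QAlg S ar) (e : A.carrier → B.carrier), QHom A B e ∧ Function.Surjective e ∧
        ∀ a a', p a a' = B.d (e a) (e a')) ∧
    (∀ (B C : QAlg S ar) (e : A.carrier → B.carrier) (f : A.carrier → C.carrier),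
      QHom A B e → Function.Surjective e → QHom A C f →
      ((∃ g : B.carrier → C.carrier, QHom B C g ∧ ∀ a, g (e a) = f a) ↔
        ∀ a a', C.d (f a) (f a') ≤ B.d (e a) (e a'))) :=
  ⟨fun _ _ he _ => he.isCongruence,
    fun _ hp => ⟨hp.quotient, _, hp.qHom_mk, Quotient.mk_surjective, fun _ _ => rfl⟩,
    fun _ _ _ _ he hsurj hf => he.exists_factor_iff hsurj hf⟩
end

section
/- Let c > 1 be a regular cardinal and let e : A → B be a surjective nonexpansive map of extended metric spaces. Then every extended metric space X of cardinality < c is projective with respect to e (i.e. every nonexpansive map h : X → B can be written as h = e ∘ g for some nonexpansive g : X → A) if and only if e is c-reflexive. -/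
open ENNReal

universe u

/-- A surjective nonexpansive map `e : A → B` of extended metric spaces is
`c`-reflexive if every subset of `B` of cardinality `< c` is the isometric image of
a subset of `A`. -/
def CReflexive {A B : Type u} [EMetricSpace A] [EMetricSpace B] (c : Cardinal.{u})
    (e : A → B) : Prop :=
  ∀ B₀ : Set B, Cardinal.mk ↥B₀ < c →
    ∃ A₀ : Set A, e '' A₀ = B₀ ∧
      ∀ a ∈ A₀, ∀ a' ∈ A₀, edist (e a) (e a') = edist a a'

/-- For a regular cardinal `c > 1` and a surjective nonexpansive map `e : A → B` of
extended metric spaces: every extended metric space of cardinality `< c` is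
projective with respect to `e` iff `e` is `c`-reflexive. -/
theorem c_reflexive_iff_projective (c : Cardinal.{u}) (hc : 1 < c)
    (hreg : c.IsRegular) {A B : Type u} [EMetricSpace A] [EMetricSpace B]
    (e : A → B) (hsurj : Function.Surjective e)
    (hnonexp : ∀ a a' : A, edist (e a) (e a') ≤ edist a a') :
    (∀ (X : Type u) [EMetricSpace X], Cardinal.mk X < c →
      ∀ h : X → B, (∀ x y : X, edist (h x) (h y) ≤ edist x y) →
        ∃ g : X → A, (∀ x y : X, edist (g x) (g y) ≤ edist x y) ∧ e ∘ g = h) ↔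
    CReflexive c e := by
  constructor
  · intro hproj B₀ hB₀
    obtain ⟨g, hg, hcomp⟩ := hproj ↥B₀ hB₀ (fun x => x.val)
      (fun x y => le_of_eq (Subtype.edist_eq x y).symm)
    refine ⟨Set.range g, ?_, ?_⟩
    · rw [← Set.range_comp, hcomp, Subtype.range_coe]
    · rintro _ ⟨x, rfl⟩ _ ⟨y, rfl⟩
      refine le_antisymm (hnonexp _ _) ?_
      have h1 : e (g x) = x.val := congrFun hcomp x
      have h2 : e (g y) = y.val := congrFun hcomp y
      calc edist (g x) (g y) ≤ edist x y := hg x y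
        _ = edist x.val y.val := Subtype.edist_eq x y
        _ = edist (e (g x)) (e (g y)) := by rw [h1, h2]
  · intro hrefl X _ hX h hh
    have hB₀ : Cardinal.mk ↥(Set.range h) < c :=
      lt_of_le_of_lt Cardinal.mk_range_le hX
    obtain ⟨A₀, hA₀, hiso⟩ := hrefl (Set.range h) hB₀
    have hmem : ∀ x, h x ∈ e '' A₀ := by
      intro x; rw [hA₀]; exact Set.mem_range_self x
    choose g hgA hge using hmem
    refine ⟨g, ?_, funext hge⟩
    intro x y
    calc edist (g x) (g y) = edist (e (g x)) (e (g y)) :=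
          (hiso _ (hgA x) _ (hgA y)).symm
      _ = edist (h x) (h y) := by rw [hge x, hge y]
      _ ≤ edist x y := hh x y
end

section
/- For every nominal set Z there exist a strong nominal set X and a surjective equivariant map e : X → Z that preserves least supports, i.e. supp_Z(e(x)) = supp_X(x) for all x ∈ X. -/
universe u

/-- The group of permutations of the atoms `𝔸 = ℕ` that move only finitely many
atoms. -/
def FinPerm : Subgroup (Equiv.Perm ℕ) where
  carrier := {π : Equiv.Perm ℕ | {a : ℕ | π a ≠ a}.Finite}
  one_mem' := by
    show Set.Finite {a : ℕ | (1 : Equiv.Perm ℕ) a ≠ a}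
    have h : {a : ℕ | (1 : Equiv.Perm ℕ) a ≠ a} = ∅ := by
      ext a
      simp
    rw [h]
    exact Set.finite_empty
  mul_mem' := by
    intro π σ hπ hσ
    apply (hπ.union hσ).subset
    intro a ha
    by_contra h
    simp only [Set.mem_union, Set.mem_setOf_eq, not_or, not_not] at h
    exact ha (by simp only [Equiv.Perm.mul_apply, h.2, h.1])
  inv_mem' := by
    intro π hπ
    have : {a : ℕ | π⁻¹ a ≠ a} = {a : ℕ | π a ≠ a} := by
      ext a
      simp only [Set.mem_setOf_eq, ne_eq, Equiv.Perm.inv_eq_iff_eq]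
      exact not_congr eq_comm
    show Set.Finite {a : ℕ | π⁻¹ a ≠ a}
    rw [this]
    exact hπ

/-- A nominal set: a set with an action of the group of finitary permutations of
atoms for which every element has a finite support. -/
structure NominalSet : Type (u + 1) where
  carrier : Type u
  act : FinPerm → carrier → carrier
  act_one : ∀ x : carrier, act 1 x = x
  act_mul : ∀ (π σ : FinPerm) (x : carrier), act (π * σ) x = act π (act σ x)
  finitely_supported : ∀ x : carrier, ∃ s : Finset ℕ,
    ∀ π : FinPerm, (∀ a ∈ s, (π : Equiv.Perm ℕ) a = a) → act π x = x

/-- `S` is a support of `x`. -/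
def NominalSet.IsSupport (N : NominalSet.{u}) (S : Set ℕ) (x : N.carrier) : Prop :=
  ∀ π : FinPerm, (∀ a ∈ S, (π : Equiv.Perm ℕ) a = a) → N.act π x = x

/-- The least support of `x`: the intersection of all finite supports of `x`. -/
def NominalSet.supp (N : NominalSet.{u}) (x : N.carrier) : Set ℕ :=
  ⋂₀ {S : Set ℕ | S.Finite ∧ N.IsSupport S x}

/-- A nominal set is strong if a finitary permutation fixes an element iff it fixes
its least support pointwise. -/
def NominalSet.Strong (N : NominalSet.{u}) : Prop :=
  ∀ (x : N.carrier) (π : FinPerm),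
    (∀ a ∈ N.supp x, (π : Equiv.Perm ℕ) a = a) ↔ N.act π x = x

/-- An equivariant map of nominal sets. -/
def Equivariant (X Z : NominalSet.{u}) (f : X.carrier → Z.carrier) : Prop :=
  ∀ (π : FinPerm) (x : X.carrier), f (X.act π x) = Z.act π (f x)

/-!
A permutation fixing `S ∩ T` pointwise is a product of transpositions of atoms outside `S ∩ T`,
and each of these fixes every element supported by both `S` and `T`. Hence the least support is a
support, and `supp (π • z) = π '' supp z`. The cover consists of the pairs `(z, l)` where the list
`l` enumerates `supp z`, with the diagonal action: a permutation fixes `(z, l)` exactly when it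
fixes every entry of `l`, which makes the cover strong with `supp (z, l) = supp z`.
-/

lemma List.map_eq_self_iff {α : Type*} {f : α → α} {l : List α} :
    l.map f = l ↔ ∀ a ∈ l, f a = a := by
  simpa using List.map_eq_map_iff (f := f) (g := id) (l := l)

lemma List.setOf_mem_map {α β : Type*} (f : α → β) (l : List α) :
    {b | b ∈ l.map f} = f '' {a | a ∈ l} := by
  ext; simp

namespace FinPerm

def swap (a b : ℕ) : FinPerm :=
  ⟨Equiv.swap a b, finite_compl_fixedBy_swap⟩

@[simp] lemma coe_swap (a b : ℕ) : ((swap a b : FinPerm) : Equiv.Perm ℕ) = Equiv.swap a b := rfl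

end FinPerm

namespace NominalSet

lemma act_inv_act (N : NominalSet.{u}) (π : FinPerm) (x : N.carrier) :
    N.act π⁻¹ (N.act π x) = x := by
  rw [← N.act_mul, inv_mul_cancel, N.act_one]

variable {N : NominalSet.{u}} {S T : Set ℕ} {x : N.carrier}

lemma IsSupport.act_swap (hS : N.IsSupport S x) {a b : ℕ} (ha : a ∉ S) (hb : b ∉ S) :
    N.act (FinPerm.swap a b) x = x :=
  hS _ fun _ hc => Equiv.swap_apply_of_ne_of_ne (by rintro rfl; exact ha hc)
    (by rintro rfl; exact hb hc)

lemma act_swap_of_notMem_union (hS : N.IsSupport S x) (hT : N.IsSupport T x) {a c : ℕ}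
    (ha : a ∉ S ∩ T) (hc : c ∉ S ∪ T) : N.act (FinPerm.swap c a) x = x := by
  rw [Set.mem_union, not_or] at hc
  by_cases haS : a ∈ S
  · exact hT.act_swap hc.2 fun haT => ha ⟨haS, haT⟩
  · exact hS.act_swap hc.1 haS

lemma act_swap_of_notMem_inter (hS : N.IsSupport S x) (hT : N.IsSupport T x)
    (hSf : S.Finite) (hTf : T.Finite) {a b : ℕ} (ha : a ∉ S ∩ T) (hb : b ∉ S ∩ T) :
    N.act (FinPerm.swap a b) x = x := by
  rcases eq_or_ne b a with rfl | hba
  · have : FinPerm.swap b b = 1 := Subtype.ext (Equiv.swap_self b)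
    rw [this, N.act_one]
  obtain ⟨c, hc⟩ := ((hSf.union hTf).union (Set.finite_singleton b)).exists_notMem
  rw [Set.mem_union, Set.mem_singleton_iff, not_or] at hc
  obtain ⟨hcST, hcb⟩ := hc
  -- conjugate `swap a b` through a fresh atom `c`
  have hswap : FinPerm.swap a b = FinPerm.swap c a * (FinPerm.swap c b * FinPerm.swap c a) := by
    ext1
    simp only [Subgroup.coe_mul, FinPerm.coe_swap, ← mul_assoc, Equiv.swap_comm c b]
    exact (Equiv.swap_mul_swap_mul_swap (Ne.symm hcb) hba).symm
  rw [hswap, N.act_mul, N.act_mul, act_swap_of_notMem_union hS hT ha hcST,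
    act_swap_of_notMem_union hS hT hb hcST, act_swap_of_notMem_union hS hT ha hcST]

instance : MulAction FinPerm N.carrier where
  smul := N.act
  one_smul := N.act_one
  mul_smul := N.act_mul

lemma IsSupport.inter (hS : N.IsSupport S x) (hT : N.IsSupport T x)
    (hSf : S.Finite) (hTf : T.Finite) : N.IsSupport (S ∩ T) x := by
  intro π hπ
  let P : Set (Equiv.Perm ℕ) := {σ | ∃ a b, a ≠ b ∧ a ∉ S ∩ T ∧ b ∉ S ∩ T ∧ σ = Equiv.swap a b}
  have hP : ∀ σ ∈ P, σ.IsSwap := by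
    rintro _ ⟨a, b, hab, -, -, rfl⟩
    exact ⟨a, b, hab, rfl⟩
  have hclosure : Subgroup.closure P ≤ (MulAction.stabilizer FinPerm x).map FinPerm.subtype := by
    rw [Subgroup.closure_le]
    rintro _ ⟨a, b, -, ha, hb, rfl⟩
    exact ⟨FinPerm.swap a b, act_swap_of_notMem_inter hS hT hSf hTf ha hb, rfl⟩
  have hπP : (π : Equiv.Perm ℕ) ∈ Subgroup.closure P := by
    refine (mem_closure_isSwap hP).2 ⟨π.2, fun a => ?_⟩
    by_cases ha : (π : Equiv.Perm ℕ) a = a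
    · rw [ha]
      exact MulAction.mem_orbit_self a
    have haI : a ∉ S ∩ T := fun h => ha (hπ a h)
    have hπaI : (π : Equiv.Perm ℕ) a ∉ S ∩ T := fun h => ha ((π : Equiv.Perm ℕ).injective (hπ _ h))
    exact ⟨⟨_, Subgroup.subset_closure ⟨_, a, ha, hπaI, haI, rfl⟩⟩, Equiv.swap_apply_right _ _⟩
  obtain ⟨σ, hσ, hσπ⟩ := hclosure hπP
  rw [← Subtype.ext hσπ]
  exact hσ

lemma supp_subset (hSf : S.Finite) (hS : N.IsSupport S x) : N.supp x ⊆ S :=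
  Set.sInter_subset_of_mem (show S ∈ {S : Set ℕ | S.Finite ∧ N.IsSupport S x} from ⟨hSf, hS⟩)

-- A support that is minimal for inclusion is contained in every finite support, since the
-- intersection with any other finite support is again a support.
lemma exists_supp_eq_coe (x : N.carrier) : ∃ s : Finset ℕ, N.IsSupport ↑s x ∧ N.supp x = ↑s := by
  obtain ⟨s, hs, hmin⟩ := wellFounded_lt.has_min {s : Finset ℕ | N.IsSupport ↑s x}
    (N.finitely_supported x)
  refine ⟨s, hs, (supp_subset s.finite_toSet hs).antisymm ?_⟩
  rintro a ha T ⟨hTf, hT⟩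
  have hsT : s ∩ hTf.toFinset = s := by
    refine (Finset.inter_subset_left.eq_or_ssubset).resolve_right fun hlt => hmin _ ?_ hlt
    simpa using hs.inter hT s.finite_toSet hTf
  exact hTf.mem_toFinset.1 (Finset.inter_eq_left.1 hsT ha)

lemma supp_finite (x : N.carrier) : (N.supp x).Finite := by
  obtain ⟨s, -, hs⟩ := exists_supp_eq_coe x
  exact hs ▸ s.finite_toSet

lemma supp_isSupport (x : N.carrier) : N.IsSupport (N.supp x) x := by
  obtain ⟨s, hs, hsupp⟩ := exists_supp_eq_coe x
  exact hsupp ▸ hs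

lemma IsSupport.act (π : FinPerm) (h : N.IsSupport S x) :
    N.IsSupport ((π : Equiv.Perm ℕ) '' S) (N.act π x) := by
  intro σ hσ
  have hconj : N.act (π⁻¹ * σ * π) x = x := h _ fun a ha => by simp [hσ _ ⟨a, ha, rfl⟩]
  calc N.act σ (N.act π x) = N.act (π * (π⁻¹ * σ * π)) x := by rw [← N.act_mul]; group
    _ = N.act π x := by rw [N.act_mul, hconj]

lemma supp_act_subset (π : FinPerm) (x : N.carrier) :
    N.supp (N.act π x) ⊆ (π : Equiv.Perm ℕ) '' N.supp x :=
  supp_subset ((supp_finite x).image _) ((supp_isSupport x).act π)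

lemma supp_act (π : FinPerm) (x : N.carrier) :
    N.supp (N.act π x) = (π : Equiv.Perm ℕ) '' N.supp x := by
  refine (supp_act_subset π x).antisymm fun _ ⟨a, ha, hπa⟩ => ?_
  obtain ⟨b, hb, rfl⟩ := supp_act_subset π⁻¹ (N.act π x) (N.act_inv_act π x ▸ ha)
  simpa [← hπa] using hb

lemma supp_eq_of_isSupport_of_fixes (hTf : T.Finite) (hT : N.IsSupport T x)
    (hfix : ∀ π : FinPerm, N.act π x = x → ∀ a ∈ T, (π : Equiv.Perm ℕ) a = a) :
    N.supp x = T := by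
  refine (supp_subset hTf hT).antisymm fun a haT => ?_
  by_contra ha
  obtain ⟨b, hb⟩ := ((supp_finite x).union hTf).exists_notMem
  rw [Set.mem_union, not_or] at hb
  have hab := hfix _ ((supp_isSupport x).act_swap ha hb.1) a haT
  rw [FinPerm.coe_swap, Equiv.swap_apply_left] at hab
  exact hb.2 (hab ▸ haT)

def cover (Z : NominalSet.{u}) : NominalSet.{u} where
  carrier := {p : Z.carrier × List ℕ // {a | a ∈ p.2} = Z.supp p.1}
  act π p := ⟨(Z.act π p.1.1, p.1.2.map (π : Equiv.Perm ℕ)), by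
    rw [List.setOf_mem_map, p.2, Z.supp_act]⟩
  act_one p := Subtype.ext (Prod.ext (Z.act_one _) (by simp))
  act_mul π σ p := Subtype.ext (Prod.ext (Z.act_mul π σ _) (by simp))
  finitely_supported p := ⟨p.1.2.toFinset, fun π hπ =>
    Subtype.ext (Prod.ext (supp_isSupport p.1.1 π fun a ha => hπ a (by simpa [← p.2] using ha))
      (List.map_eq_self_iff.2 fun a ha => hπ a (by simpa using ha)))⟩

variable (Z : NominalSet.{u})

lemma cover_act_eq_self_iff (π : FinPerm) (p : (cover Z).carrier) :
    (cover Z).act π p = p ↔ ∀ a ∈ p.1.2, (π : Equiv.Perm ℕ) a = a := by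
  refine ⟨fun h => List.map_eq_self_iff.1 (congrArg (fun q => q.1.2) h), fun h => ?_⟩
  exact Subtype.ext (Prod.ext (supp_isSupport p.1.1 π fun a ha => h a (p.2.symm ▸ ha :))
    (List.map_eq_self_iff.2 h))

lemma cover_supp (p : (cover Z).carrier) : (cover Z).supp p = {a | a ∈ p.1.2} :=
  supp_eq_of_isSupport_of_fixes p.1.2.finite_toSet
    (fun π => (cover_act_eq_self_iff Z π p).2) (fun π => (cover_act_eq_self_iff Z π p).1)

lemma cover_strong : (cover Z).Strong := fun p π => by
  rw [cover_supp, cover_act_eq_self_iff]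
  rfl

lemma surjective_cover_fst : Function.Surjective fun p : (cover Z).carrier => p.1.1 :=
  fun z => ⟨⟨(z, (supp_finite z).toFinset.toList), by simp⟩, rfl⟩

end NominalSet

/-- Every nominal set is a quotient of a strong nominal set via a surjective
equivariant map preserving least supports. -/
theorem exists_strong_cover (Z : NominalSet.{u}) :
    ∃ (X : NominalSet.{u}) (e : X.carrier → Z.carrier),
      X.Strong ∧ Function.Surjective e ∧ Equivariant X Z e ∧
      ∀ x : X.carrier, Z.supp (e x) = X.supp x :=
  ⟨Z.cover, fun p => p.1.1, Z.cover_strong, Z.surjective_cover_fst, fun _ _ => rfl,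
    fun p => p.2.symm.trans (Z.cover_supp p).symm⟩
end
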